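/- arXiv:2010.06250 — 2 statements merged into one kernel-verified Lean document; each statement's English description precedes it below -/
import Mathlib

section
/- (Lemma 9.) Let g : ℝⁿ → ℝ ∪ {+∞} be proper, convex and lower semicontinuous, η > 0, σ > 0, w ≥ 1, and let S : ℝⁿ → ℝ be continuously differentiable. Let (Ω, F, P) be a probability space and 𝒢 ⊆ F a sub-σ-algebra. Let Y : Ω → ℝⁿ be 𝒢-measurable and square-integrable, and let G : Ω → ℝⁿ be square-integrable with ∇S(Y) square-integrable, such that E[G | 𝒢] = ∇S(Y) almost surely and E[‖G − ∇S(Y)‖² | 𝒢] ≤ σ²/w² almost surely. Set Y⁺ = prox_{ηg}(Y − η G). Then E[⟨G − ∇S(Y), Y⁺ − Y⟩ | 𝒢] ≥ −η σ²/w² almost surely. -/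
/-!
Write `Δ = G - ∇S(Y)` and let `Ȳ = prox_{ηg}(Y - η∇S(Y))`, a `𝒢`-measurable point. The proximal
map is 1-Lipschitz, so `‖Y⁺ - Ȳ‖ ≤ η‖Δ‖` and pointwise `⟪Δ, Y⁺ - Y⟫ ≥ ⟪Δ, Ȳ - Y⟫ - η‖Δ‖²`.
Conditioning on `𝒢`, the first term vanishes because `Ȳ - Y` can be pulled out and
`E[Δ | 𝒢] = 0`, while the second is at least `-ησ²/w²` by the variance bound.
-/

noncomputable section

open Finset MeasureTheory
open scoped RealInnerProductSpace

/-- `g : ℝⁿ → ℝ ∪ {+∞}` is proper, convex and lower semicontinuous. -/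
def ProperConvexLsc {n : ℕ} (g : EuclideanSpace ℝ (Fin n) → WithTop ℝ) : Prop :=
  (∃ x, g x ≠ ⊤) ∧ LowerSemicontinuous g ∧
    ∀ x y : EuclideanSpace ℝ (Fin n), ∀ a b : ℝ, 0 ≤ a → 0 ≤ b → a + b = 1 →
      g (a • x + b • y) ≤ (a : WithTop ℝ) * g x + (b : WithTop ℝ) * g y

/-- `p` is a minimizer of `z ↦ η·g(z) + ½‖u − z‖²`. -/
def IsProxPt {n : ℕ} (g : EuclideanSpace ℝ (Fin n) → WithTop ℝ) (η : ℝ)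
    (u p : EuclideanSpace ℝ (Fin n)) : Prop :=
  ∀ z : EuclideanSpace ℝ (Fin n),
    (η : WithTop ℝ) * g p + ((1 / 2 * ‖u - p‖ ^ 2 : ℝ) : WithTop ℝ) ≤
      (η : WithTop ℝ) * g z + ((1 / 2 * ‖u - z‖ ^ 2 : ℝ) : WithTop ℝ)

/-- `prox` is the proximal operator of `ηg`: `prox u` is the unique minimizer of
`z ↦ η·g(z) + ½‖u − z‖²`. -/
def IsProxFun {n : ℕ} (g : EuclideanSpace ℝ (Fin n) → WithTop ℝ) (η : ℝ)
    (prox : EuclideanSpace ℝ (Fin n) → EuclideanSpace ℝ (Fin n)) : Prop :=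
  ∀ u, IsProxPt g η u (prox u) ∧ ∀ q, IsProxPt g η u q → q = prox u

/-- The prox-grad residual `P_η^g(x; d) = (x − prox_{ηg}(x − η d))/η`. -/
def proxRes {n : ℕ} (prox : EuclideanSpace ℝ (Fin n) → EuclideanSpace ℝ (Fin n)) (η : ℝ)
    (x d : EuclideanSpace ℝ (Fin n)) : EuclideanSpace ℝ (Fin n) :=
  η⁻¹ • (x - prox (x - η • d))

open Filter Topology

section Prox

variable {n : ℕ} {g : EuclideanSpace ℝ (Fin n) → WithTop ℝ} {η : ℝ}
  {u v p q : EuclideanSpace ℝ (Fin n)}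

lemma IsProxPt.ne_top (hg : ProperConvexLsc g) (hη : 0 < η) (hp : IsProxPt g η u p) :
    g p ≠ ⊤ := by
  obtain ⟨x, hx⟩ := hg.1
  obtain ⟨c, hc⟩ := WithTop.ne_top_iff_exists.mp hx
  intro htop
  have h := hp x
  rw [htop, ← hc, WithTop.mul_top (by exact_mod_cast hη.ne')] at h
  norm_cast at h

/-- `(u - p) / η` is a subgradient of `g` at `p`: compare `p` with `(1 - t) • p + t • q` in the
minimisation and let `t → 0`. -/
lemma IsProxPt.inner_sub_le (hg : ProperConvexLsc g) (hη : 0 < η) (hp : IsProxPt g η u p)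
    {a b : ℝ} (ha : g p = a) (hb : g q = b) :
    ⟪u - p, q - p⟫ ≤ η * (b - a) := by
  have step : ∀ t ∈ Set.Ioc (0 : ℝ) 1,
      ⟪u - p, q - p⟫ ≤ η * (b - a) + t / 2 * ‖q - p‖ ^ 2 := by
    rintro t ⟨ht0, ht1⟩
    have hconv := hg.2.2 p q (1 - t) t (by linarith) ht0.le (by ring)
    rw [ha, hb] at hconv
    norm_cast at hconv
    obtain ⟨c, hc⟩ := WithTop.ne_top_iff_exists.mp (ne_top_of_le_ne_top WithTop.coe_ne_top hconv)
    rw [← hc, WithTop.coe_le_coe] at hconv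
    have hmin := hp ((1 - t) • p + t • q)
    rw [ha, ← hc] at hmin
    norm_cast at hmin
    have hnorm : ‖u - ((1 - t) • p + t • q)‖ ^ 2 =
        ‖u - p‖ ^ 2 - 2 * t * ⟪u - p, q - p⟫ + t ^ 2 * ‖q - p‖ ^ 2 := by
      rw [show u - ((1 - t) • p + t • q) = (u - p) - t • (q - p) by module, norm_sub_sq_real,
        real_inner_smul_right, norm_smul, mul_pow, Real.norm_eq_abs, sq_abs]
      ring
    rw [hnorm] at hmin
    have hscaled : t * ⟪u - p, q - p⟫ ≤ t * (η * (b - a) + t / 2 * ‖q - p‖ ^ 2) := by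
      nlinarith [mul_le_mul_of_nonneg_left hconv hη.le]
    exact le_of_mul_le_mul_left hscaled ht0
  have hlim : Tendsto (fun t : ℝ => η * (b - a) + t / 2 * ‖q - p‖ ^ 2) (𝓝[>] 0)
      (𝓝 (η * (b - a))) := by
    have hcont : Continuous fun t : ℝ => η * (b - a) + t / 2 * ‖q - p‖ ^ 2 := by fun_prop
    simpa using (hcont.tendsto 0).mono_left nhdsWithin_le_nhds
  exact ge_of_tendsto hlim (by filter_upwards [Ioc_mem_nhdsGT zero_lt_one] using step)

lemma IsProxPt.norm_sub_le (hg : ProperConvexLsc g) (hη : 0 < η) (hp : IsProxPt g η u p)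
    (hq : IsProxPt g η v q) : ‖p - q‖ ≤ ‖u - v‖ := by
  obtain ⟨a, ha⟩ := WithTop.ne_top_iff_exists.mp (hp.ne_top hg hη)
  obtain ⟨b, hb⟩ := WithTop.ne_top_iff_exists.mp (hq.ne_top hg hη)
  have hpq := hp.inner_sub_le hg hη ha.symm hb.symm
  have hqp := hq.inner_sub_le hg hη hb.symm ha.symm
  have hsum : ⟪u - p, q - p⟫ + ⟪v - q, p - q⟫ = ‖p - q‖ ^ 2 - ⟪u - v, p - q⟫ := by
    rw [← real_inner_self_eq_norm_sq]
    simp only [inner_sub_left, inner_sub_right, real_inner_comm p q, real_inner_comm p u,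
      real_inner_comm p v, real_inner_comm q u, real_inner_comm q v]
    ring
  have hfirm : ‖p - q‖ ^ 2 ≤ ⟪u - v, p - q⟫ := by linarith
  nlinarith [real_inner_le_norm (u - v) (p - q), norm_nonneg (p - q), norm_nonneg (u - v)]

lemma IsProxFun.lipschitzWith {prox : EuclideanSpace ℝ (Fin n) → EuclideanSpace ℝ (Fin n)}
    (hg : ProperConvexLsc g) (hη : 0 < η) (hprox : IsProxFun g η prox) :
    LipschitzWith 1 prox :=
  LipschitzWith.of_dist_le_mul fun x y => by
    simpa [dist_eq_norm] using (hprox x).1.norm_sub_le hg hη (hprox y).1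

end Prox

section InnerProductSpace

variable {E : Type*} [NormedAddCommGroup E] [InnerProductSpace ℝ E]

lemma LipschitzWith.inner_sub_apply_sub_smul_ge {T : E → E} (hT : LipschitzWith 1 T) {η : ℝ}
    (hη : 0 ≤ η) (y a b : E) :
    ⟪b - a, T (y - η • a) - y⟫ - η * ‖b - a‖ ^ 2 ≤ ⟪b - a, T (y - η • b) - y⟫ := by
  have hT' : ‖T (y - η • b) - T (y - η • a)‖ ≤ η * ‖b - a‖ := by
    calc ‖T (y - η • b) - T (y - η • a)‖ ≤ ‖(y - η • b) - (y - η • a)‖ := by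
          simpa [dist_eq_norm] using hT.dist_le_mul (y - η • b) (y - η • a)
      _ = η * ‖b - a‖ := by
          rw [show (y - η • b) - (y - η • a) = -(η • (b - a)) by module, norm_neg, norm_smul,
            Real.norm_of_nonneg hη]
  have hsplit : ⟪b - a, T (y - η • b) - y⟫ =
      ⟪b - a, T (y - η • a) - y⟫ + ⟪b - a, T (y - η • b) - T (y - η • a)⟫ := by
    rw [← inner_add_right]
    congr 1
    abel
  have hcs := neg_le_of_abs_le (abs_real_inner_le_norm (b - a) (T (y - η • b) - T (y - η • a)))
  nlinarith [norm_nonneg (b - a)]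

variable {Ω : Type*} {m m₀ : MeasurableSpace Ω} {μ : Measure Ω}

lemma MeasureTheory.MemLp.integrable_inner {f h : Ω → E} (hf : MemLp f 2 μ) (hh : MemLp h 2 μ) :
    Integrable (fun ω => ⟪f ω, h ω⟫) μ :=
  (L2.integrable_inner (𝕜 := ℝ) (hf.toLp f) (hh.toLp h)).congr <| by
    filter_upwards [hf.coeFn_toLp, hh.coeFn_toLp] with ω hfω hhω
    rw [hfω, hhω]

lemma condExp_inner_eq_zero_of_condExp_eq_zero [CompleteSpace E] {f h : Ω → E}
    (hh : AEStronglyMeasurable[m] h μ) (hf : Integrable f μ)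
    (hfh : Integrable (fun ω => ⟪f ω, h ω⟫) μ) (hf0 : μ[f|m] =ᵐ[μ] 0) :
    μ[fun ω => ⟪f ω, h ω⟫|m] =ᵐ[μ] 0 := by
  filter_upwards [condExp_bilin_of_aestronglyMeasurable_right (innerSL ℝ) hh hfh hf, hf0]
    with ω hpull hω
  rw [hω, Pi.zero_apply, map_zero, zero_apply] at hpull
  exact hpull

end InnerProductSpace

lemma LipschitzWith.memLp_comp {Ω E F : Type*} {mΩ : MeasurableSpace Ω} {μ : Measure Ω}
    [IsFiniteMeasure μ] [NormedAddCommGroup E] [NormedAddCommGroup F] {T : E → F} {K : NNReal}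
    (hT : LipschitzWith K T) {f : Ω → E} {p : ENNReal} (hf : MemLp f p μ) :
    MemLp (fun ω => T (f ω)) p μ := by
  refine ((memLp_const ‖T 0‖).add (hf.norm.const_mul K)).of_le
    (hT.continuous.comp_aestronglyMeasurable hf.1) (ae_of_all _ fun ω => ?_)
  have h := hT.norm_sub_le (f ω) 0
  rw [sub_zero] at h
  simp only [Pi.add_apply, Real.norm_eq_abs]
  rw [abs_of_nonneg (by positivity)]
  linarith [norm_le_insert' (T (f ω)) (T 0)]

lemma condExp_sub_eq_zero_of_condExp_eq {Ω E : Type*} {m m₀ : MeasurableSpace Ω}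
    {μ : Measure Ω} [NormedAddCommGroup E] [NormedSpace ℝ E] [CompleteSpace E] (hm : m ≤ m₀)
    [SigmaFinite (μ.trim hm)] {f h : Ω → E} (hh : StronglyMeasurable[m] h) (hf : Integrable f μ)
    (hhi : Integrable h μ) (hfh : μ[f|m] =ᵐ[μ] h) :
    μ[f - h|m] =ᵐ[μ] 0 := by
  filter_upwards [condExp_sub hf hhi m, hfh] with ω hsub hω
  rw [hsub, Pi.sub_apply, hω, condExp_of_stronglyMeasurable hm hh hhi, Pi.zero_apply, sub_self]

lemma ae_neg_mul_le_condExp_of_sub_mul_le {Ω : Type*} {m m₀ : MeasurableSpace Ω}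
    {μ : Measure Ω} {X V f : Ω → ℝ} {η c : ℝ} (hη : 0 ≤ η) (hX : Integrable X μ)
    (hV : Integrable V μ) (hf : Integrable f μ) (hXf : ∀ ω, X ω - η * V ω ≤ f ω)
    (hX0 : μ[X|m] =ᵐ[μ] 0) (hVc : ∀ᵐ ω ∂μ, μ[V|m] ω ≤ c) :
    ∀ᵐ ω ∂μ, -(η * c) ≤ μ[f|m] ω := by
  filter_upwards [condExp_mono (m := m) (hX.sub (hV.const_mul η)) hf (ae_of_all _ hXf),
    condExp_sub hX (hV.const_mul η) m, condExp_smul η V m, hX0, hVc]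
    with ω hmono hsub hsmul hX0ω hVcω
  have hscaled : μ[fun ω => η * V ω|m] ω = η * μ[V|m] ω := hsmul
  rw [Pi.sub_apply, hX0ω, Pi.zero_apply, hscaled] at hsub
  nlinarith [mul_le_mul_of_nonneg_left hVcω hη]

theorem stmt7_general {n : ℕ} {Ω : Type*} [inst : MeasurableSpace Ω] (μ : Measure Ω)
    [IsProbabilityMeasure μ] (m : MeasurableSpace Ω) (hm : m ≤ inst)
    (g : EuclideanSpace ℝ (Fin n) → WithTop ℝ) (hg : ProperConvexLsc g)
    (prox : EuclideanSpace ℝ (Fin n) → EuclideanSpace ℝ (Fin n))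
    (η σ w : ℝ) (hη : 0 < η)
    (hprox : IsProxFun g η prox)
    (S' : EuclideanSpace ℝ (Fin n) → EuclideanSpace ℝ (Fin n))
    (hS'cont : Continuous S')
    (Y G : Ω → EuclideanSpace ℝ (Fin n))
    (hYmeas : Measurable[m] Y)
    (hY2 : MemLp Y 2 μ) (hG2 : MemLp G 2 μ) (hSY2 : MemLp (fun ω => S' (Y ω)) 2 μ)
    (hcond : μ[G|m] =ᵐ[μ] fun ω => S' (Y ω))
    (hvar : ∀ᵐ ω ∂μ, (μ[fun ω' => ‖G ω' - S' (Y ω')‖ ^ 2|m]) ω ≤ σ ^ 2 / w ^ 2)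
    (Yp : Ω → EuclideanSpace ℝ (Fin n)) (hYp : ∀ ω, Yp ω = prox (Y ω - η • G ω)) :
    ∀ᵐ ω ∂μ,
      -(η * σ ^ 2 / w ^ 2) ≤ (μ[fun ω' => ⟪G ω' - S' (Y ω'), Yp ω' - Y ω'⟫|m]) ω := by
  have hL := hprox.lipschitzWith hg hη
  have hSYm : Measurable[m] fun ω => S' (Y ω) := hS'cont.measurable.comp hYmeas
  have hΔ2 : MemLp (fun ω => G ω - S' (Y ω)) 2 μ := hG2.sub hSY2
  have hYb2 : MemLp (fun ω => prox (Y ω - η • S' (Y ω)) - Y ω) 2 μ :=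
    (hL.memLp_comp (hY2.sub (hSY2.const_smul η))).sub hY2
  have hYp2 : MemLp (fun ω => Yp ω - Y ω) 2 μ := by
    simp_rw [hYp]
    exact (hL.memLp_comp (hY2.sub (hG2.const_smul η))).sub hY2
  have hYbm : Measurable[m] fun ω => prox (Y ω - η • S' (Y ω)) - Y ω :=
    (hL.continuous.measurable.comp (hYmeas.sub (hSYm.const_smul η))).sub hYmeas
  have hmean : μ[fun ω => ⟪G ω - S' (Y ω), prox (Y ω - η • S' (Y ω)) - Y ω⟫|m] =ᵐ[μ] 0 :=
    condExp_inner_eq_zero_of_condExp_eq_zero hYbm.aestronglyMeasurable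
      (hΔ2.integrable one_le_two) (hΔ2.integrable_inner hYb2)
      (condExp_sub_eq_zero_of_condExp_eq hm hSYm.stronglyMeasurable
        (hG2.integrable one_le_two) (hSY2.integrable one_le_two) hcond)
  have hpert (ω : Ω) := hL.inner_sub_apply_sub_smul_ge hη.le (Y ω) (S' (Y ω)) (G ω)
  simp_rw [← hYp] at hpert
  simpa only [mul_div_assoc] using ae_neg_mul_le_condExp_of_sub_mul_le hη.le
    (hΔ2.integrable_inner hYb2) ((memLp_two_iff_integrable_sq_norm hΔ2.1).1 hΔ2)
    (hΔ2.integrable_inner hYp2) hpert hmean hvar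

/-- Lemma 9: if `E[G | 𝒢] = ∇S(Y)` a.s. and
`E[‖G − ∇S(Y)‖² | 𝒢] ≤ σ²/w²` a.s., then with `Y⁺ = prox_{ηg}(Y − ηG)`,
`E[⟨G − ∇S(Y), Y⁺ − Y⟩ | 𝒢] ≥ −ησ²/w²` almost surely. -/
theorem stmt7 {n : ℕ} {Ω : Type*} [inst : MeasurableSpace Ω] (μ : Measure Ω)
    [IsProbabilityMeasure μ] (m : MeasurableSpace Ω) (hm : m ≤ inst)
    (g : EuclideanSpace ℝ (Fin n) → WithTop ℝ) (hg : ProperConvexLsc g)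
    (prox : EuclideanSpace ℝ (Fin n) → EuclideanSpace ℝ (Fin n))
    (η σ w : ℝ) (hη : 0 < η) (hσ : 0 < σ) (hw : 1 ≤ w)
    (hprox : IsProxFun g η prox)
    (S : EuclideanSpace ℝ (Fin n) → ℝ) (S' : EuclideanSpace ℝ (Fin n) → EuclideanSpace ℝ (Fin n))
    (hgrad : ∀ x, HasGradientAt S (S' x) x) (hS'cont : Continuous S')
    (Y G : Ω → EuclideanSpace ℝ (Fin n))
    (hYmeas : Measurable[m] Y)
    (hY2 : MemLp Y 2 μ) (hG2 : MemLp G 2 μ) (hSY2 : MemLp (fun ω => S' (Y ω)) 2 μ)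
    (hcond : μ[G|m] =ᵐ[μ] fun ω => S' (Y ω))
    (hvar : ∀ᵐ ω ∂μ, (μ[fun ω' => ‖G ω' - S' (Y ω')‖ ^ 2|m]) ω ≤ σ ^ 2 / w ^ 2)
    (Yp : Ω → EuclideanSpace ℝ (Fin n)) (hYp : ∀ ω, Yp ω = prox (Y ω - η • G ω)) :
    ∀ᵐ ω ∂μ,
      -(η * σ ^ 2 / w ^ 2) ≤ (μ[fun ω' => ⟪G ω' - S' (Y ω'), Yp ω' - Y ω'⟫|m]) ω :=
  stmt7_general (inst := inst) μ m hm g hg prox η σ w hη hprox S' hS'cont Y G hYmeas hY2 hG2 hSY2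
    hcond hvar Yp hYp
end
end

section
/- (Expected per-step decrease, key step of Theorem 4.) Let g : ℝⁿ → ℝ ∪ {+∞} be proper, convex and lower semicontinuous, let S : ℝⁿ → ℝ be continuously differentiable and L-smooth on dom g, and let η ∈ (0, 1/L), δ > 0, σ > 0, w ≥ 1. Let (Ω, F, P) be a probability space, 𝒢 ⊆ F a sub-σ-algebra, Y : Ω → ℝⁿ a 𝒢-measurable square-integrable random vector taking values in dom g, and G : Ω → ℝⁿ square-integrable with ∇S(Y) square-integrable, E[G | 𝒢] = ∇S(Y) a.s. and E[‖G − ∇S(Y)‖² | 𝒢] ≤ σ²/w² a.s. Set Y⁺ = prox_{ηg}(Y − η G) and assume ‖P_η^g(Y; G)‖ ≥ δ/w almost surely, and that S(Y) + g(Y) and S(Y⁺) + g(Y⁺) are integrable. Then E[(S(Y) + g(Y)) − (S(Y⁺) + g(Y⁺)) | 𝒢] ≥ (η/w²)·((1 − ηL)δ²/2 − σ²) almost surely. -/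
/-! Optimality of `Y⁺` in the prox problem, tested against `(1 - t) • Y⁺ + t • Y` with `t → 0⁺`,
gives `η g(Y⁺) + ⟪Y - ηG - Y⁺, Y - Y⁺⟫ ≤ η g(Y)`; the descent lemma for `S` along the segment
`[Y, Y⁺] ⊆ dom g` gives `S(Y⁺) ≤ S(Y) + ⟪∇S(Y), Y⁺ - Y⟫ + L/2 ‖Y⁺ - Y‖²`. Adding the two and
absorbing the gradient error `G - ∇S(Y)` by Young's inequality yields, pointwise,
`F(Y) - F(Y⁺) ≥ η(1 - ηL)/2 ‖P_η^g(Y; G)‖² - η/2 ‖G - ∇S(Y)‖²` for `F = S + g`. The residual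
bound and the conditional variance bound then pass through the monotone conditional expectation.
-/

noncomputable section

open Finset MeasureTheory
open scoped RealInnerProductSpace

open Set Filter Topology

def ExtConvex {E : Type*} [AddCommGroup E] [Module ℝ E] (g : E → WithTop ℝ) : Prop :=
  ∀ x y : E, ∀ a b : ℝ, 0 ≤ a → 0 ≤ b → a + b = 1 →
    g (a • x + b • y) ≤ (a : WithTop ℝ) * g x + (b : WithTop ℝ) * g y

theorem ProperConvexLsc.extConvex {n : ℕ} {g : EuclideanSpace ℝ (Fin n) → WithTop ℝ}
    (hg : ProperConvexLsc g) : ExtConvex g :=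
  hg.2.2

namespace ExtConvex

variable {E : Type*} [AddCommGroup E] [Module ℝ E] {g : E → WithTop ℝ}

theorem exists_eq_coe_le (hg : ExtConvex g) {x y : E} {gx gy a b : ℝ} (hx : g x = gx)
    (hy : g y = gy) (ha : 0 ≤ a) (hb : 0 ≤ b) (hab : a + b = 1) :
    ∃ r : ℝ, g (a • x + b • y) = r ∧ r ≤ a * gx + b * gy := by
  have h := hg x y a b ha hb hab
  rw [hx, hy, ← WithTop.coe_mul, ← WithTop.coe_mul, ← WithTop.coe_add] at h
  obtain ⟨r, hr⟩ := WithTop.ne_top_iff_exists.1 (ne_top_of_le_ne_top WithTop.coe_ne_top h)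
  exact ⟨r, hr.symm, by rwa [← hr, WithTop.coe_le_coe] at h⟩

theorem convex_setOf_ne_top (hg : ExtConvex g) : Convex ℝ {x | g x ≠ ⊤} := by
  intro x hx y hy a b ha hb hab
  obtain ⟨gx, hgx⟩ := WithTop.ne_top_iff_exists.1 hx
  obtain ⟨gy, hgy⟩ := WithTop.ne_top_iff_exists.1 hy
  obtain ⟨r, hr, -⟩ := hg.exists_eq_coe_le hgx.symm hgy.symm ha hb hab
  simp [hr]

end ExtConvex

lemma nonpos_of_forall_mem_Ioc_le_mul {a C : ℝ} (h : ∀ t ∈ Ioc (0 : ℝ) 1, a ≤ t * C) : a ≤ 0 := by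
  have hlim : Tendsto (fun t : ℝ => t * C) (𝓝[>] 0) (𝓝 0) := by
    simpa using ((continuous_mul_const C).tendsto 0).mono_left nhdsWithin_le_nhds
  exact ge_of_tendsto hlim (eventually_of_mem (Ioc_mem_nhdsGT zero_lt_one) h)

theorem IsProxPt.inner_le {n : ℕ} {g : EuclideanSpace ℝ (Fin n) → WithTop ℝ} (hg : ExtConvex g)
    {η : ℝ} (hη : 0 < η) {u p z : EuclideanSpace ℝ (Fin n)} (hp : IsProxPt g η u p)
    {gp gz : ℝ} (hgp : g p = gp) (hgz : g z = gz) :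
    η * gp + ⟪u - p, z - p⟫ ≤ η * gz := by
  suffices ∀ t ∈ Ioc (0 : ℝ) 1, η * gp + ⟪u - p, z - p⟫ - η * gz ≤ t * (‖z - p‖ ^ 2 / 2) by
    linarith [nonpos_of_forall_mem_Ioc_le_mul this]
  rintro t ⟨ht0, ht1⟩
  obtain ⟨r, hr, hr_le⟩ :=
    hg.exists_eq_coe_le hgp hgz (sub_nonneg.2 ht1) ht0.le (sub_add_cancel 1 t)
  have hopt := hp ((1 - t) • p + t • z)
  rw [hgp, hr, ← WithTop.coe_mul, ← WithTop.coe_mul, ← WithTop.coe_add, ← WithTop.coe_add,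
    WithTop.coe_le_coe] at hopt
  have hexpand : ‖u - ((1 - t) • p + t • z)‖ ^ 2
      = ‖u - p‖ ^ 2 - 2 * (t * ⟪u - p, z - p⟫) + t ^ 2 * ‖z - p‖ ^ 2 := by
    rw [show u - ((1 - t) • p + t • z) = (u - p) - t • (z - p) by module, norm_sub_sq_real,
      real_inner_smul_right, norm_smul, Real.norm_of_nonneg ht0.le]
    ring
  rw [hexpand] at hopt
  have : t * (η * gp + ⟪u - p, z - p⟫ - η * gz) ≤ t * (t * (‖z - p‖ ^ 2 / 2)) := by
    nlinarith [mul_le_mul_of_nonneg_left hr_le hη.le]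
  exact le_of_mul_le_mul_left this ht0

theorem Convex.le_add_inner_add_half_mul_sq_of_gradient_lipschitz
    {E : Type*} [NormedAddCommGroup E] [InnerProductSpace ℝ E] [CompleteSpace E]
    {s : Set E} (hs : Convex ℝ s) {f : E → ℝ} {f' : E → E} {L : ℝ}
    (hf : ∀ z ∈ s, HasGradientAt f (f' z) z) {x y : E} (hx : x ∈ s) (hy : y ∈ s)
    (hLip : ∀ z ∈ s, ‖f' z - f' x‖ ≤ L * ‖z - x‖) :
    f y ≤ f x + ⟪f' x, y - x⟫ + L / 2 * ‖y - x‖ ^ 2 := by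
  set h := y - x
  have hseg : ∀ t ∈ Icc (0 : ℝ) 1, x + t • h ∈ s := fun t ht => hs.add_smul_sub_mem hx hy ht
  have hderiv : ∀ t ∈ Icc (0 : ℝ) 1, HasDerivAt
      (fun t : ℝ => f (x + t • h) - t * ⟪f' x, h⟫ - L / 2 * t ^ 2 * ‖h‖ ^ 2)
      (⟪f' (x + t • h), h⟫ - ⟪f' x, h⟫ - L * t * ‖h‖ ^ 2) t := by
    intro t ht
    have hline : HasDerivAt (fun t : ℝ => x + t • h) h t := by
      simpa using ((hasDerivAt_id t).smul_const h).const_add x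
    have hcomp := (hf _ (hseg t ht)).hasFDerivAt.comp_hasDerivAt t hline
    simp only [InnerProductSpace.toDual_apply_apply] at hcomp
    refine ((hcomp.sub ((hasDerivAt_id t).mul_const ⟪f' x, h⟫)).sub
      ((((hasDerivAt_id t).pow 2).const_mul (L / 2)).mul_const (‖h‖ ^ 2))).congr_deriv ?_
    simp only [id, Nat.cast_ofNat, one_mul]
    ring
  have hanti := antitoneOn_of_hasDerivWithinAt_nonpos (convex_Icc 0 1)
    (fun t ht => (hderiv t ht).continuousAt.continuousWithinAt)
    (fun t ht => (hderiv t (interior_subset ht)).hasDerivWithinAt)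
    (fun t ht => by
      have ht' := interior_subset ht
      have hnorm : ‖x + t • h - x‖ = t * ‖h‖ := by
        rw [add_sub_cancel_left, norm_smul, Real.norm_of_nonneg ht'.1]
      have hL := hLip _ (hseg t ht')
      rw [hnorm] at hL
      have := real_inner_le_norm (f' (x + t • h) - f' x) h
      rw [inner_sub_left] at this
      nlinarith [norm_nonneg h])
  have := hanti (left_mem_Icc.2 zero_le_one) (right_mem_Icc.2 zero_le_one) zero_le_one
  simp only [zero_smul, add_zero, one_smul, h, add_sub_cancel] at this
  linarith

theorem IsProxPt.proxGrad_sufficient_decrease {n : ℕ} {g : EuclideanSpace ℝ (Fin n) → WithTop ℝ}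
    (hg : ExtConvex g) {η L : ℝ} (hη : 0 < η) {S : EuclideanSpace ℝ (Fin n) → ℝ}
    {S' : EuclideanSpace ℝ (Fin n) → EuclideanSpace ℝ (Fin n)}
    (hgrad : ∀ x, HasGradientAt S (S' x) x)
    (hsmooth : ∀ x y, g x ≠ ⊤ → g y ≠ ⊤ → ‖S' x - S' y‖ ≤ L * ‖x - y‖)
    {x d p : EuclideanSpace ℝ (Fin n)} (hp : IsProxPt g η (x - η • d) p) {gx gp : ℝ}
    (hgx : g x = gx) (hgp : g p = gp) :
    η * (1 - η * L) / 2 * ‖η⁻¹ • (x - p)‖ ^ 2 - η / 2 * ‖d - S' x‖ ^ 2 ≤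
      (S x + gx) - (S p + gp) := by
  obtain ⟨r, rfl⟩ : ∃ r, p = x - η • r :=
    ⟨η⁻¹ • (x - p), by rw [smul_smul, mul_inv_cancel₀ hη.ne', one_smul, sub_sub_cancel]⟩
  have hres : η⁻¹ • (x - (x - η • r)) = r := by
    rw [sub_sub_cancel, smul_smul, inv_mul_cancel₀ hη.ne', one_smul]
  have hprox := hp.inner_le hg hη hgp hgx
  rw [show x - η • d - (x - η • r) = η • (r - d) by module, sub_sub_cancel,
    real_inner_smul_left, real_inner_smul_right, inner_sub_left,
    real_inner_self_eq_norm_sq] at hprox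
  have hdom : ∀ {z} {gz : ℝ}, g z = gz → z ∈ {z | g z ≠ ⊤} := fun hz => by simp [hz]
  have hdesc := hg.convex_setOf_ne_top.le_add_inner_add_half_mul_sq_of_gradient_lipschitz
    (fun z _ => hgrad z) (hdom hgx) (hdom hgp) (fun z hz => hsmooth z x hz (hdom hgx))
  rw [sub_sub_cancel_left, inner_neg_right, real_inner_smul_right, norm_neg, norm_smul,
    Real.norm_of_nonneg hη.le] at hdesc
  have hyoung : 2 * ⟪d - S' x, r⟫ ≤ ‖d - S' x‖ ^ 2 + ‖r‖ ^ 2 := by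
    linarith [norm_sub_sq_real (d - S' x) r, sq_nonneg ‖d - S' x - r‖]
  rw [hres]
  rw [inner_sub_left] at hyoung
  nlinarith [mul_le_mul_of_nonneg_left hyoung hη.le]

theorem MeasureTheory.ae_sub_mul_le_condExp {Ω : Type*} {m m₀ : MeasurableSpace Ω}
    {μ : Measure Ω} [IsFiniteMeasure μ] (hm : m ≤ m₀) {D X : Ω → ℝ} {a b c : ℝ} (ha : 0 ≤ a)
    (hD : Integrable D μ) (hX : Integrable X μ) (hDX : ∀ᵐ ω ∂μ, c - a * X ω ≤ D ω)
    (hXb : ∀ᵐ ω ∂μ, μ[X|m] ω ≤ b) :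
    ∀ᵐ ω ∂μ, c - a * b ≤ μ[D|m] ω := by
  have hlin : μ[(fun _ => c) - a • X|m] =ᵐ[μ] fun ω => c - a * μ[X|m] ω := by
    filter_upwards [condExp_sub (integrable_const c) (hX.smul a) m, condExp_smul a X m]
      with ω hsub hsmul
    rw [hsub, Pi.sub_apply, hsmul, condExp_const hm]
    rfl
  filter_upwards [condExp_mono (m := m) ((integrable_const c).sub (hX.smul a)) hD hDX, hlin, hXb]
    with ω hmono hlinω hXbω
  rw [hlinω] at hmono
  linarith [mul_le_mul_of_nonneg_left hXbω ha]

theorem stmt10_general {n : ℕ} {Ω : Type*} [inst : MeasurableSpace Ω] (μ : Measure Ω)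
    [IsProbabilityMeasure μ] (m : MeasurableSpace Ω) (hm : m ≤ inst)
    (g : EuclideanSpace ℝ (Fin n) → WithTop ℝ) (hg : ProperConvexLsc g)
    (prox : EuclideanSpace ℝ (Fin n) → EuclideanSpace ℝ (Fin n))
    (L η δ σ w : ℝ) (hL : 0 < L) (hη : 0 < η) (hη' : η < 1 / L) (hδ : 0 < δ)
    (hw : 1 ≤ w)
    (hprox : IsProxFun g η prox)
    (S : EuclideanSpace ℝ (Fin n) → ℝ) (S' : EuclideanSpace ℝ (Fin n) → EuclideanSpace ℝ (Fin n))
    (hgrad : ∀ x, HasGradientAt S (S' x) x)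
    (hsmooth : ∀ x y : EuclideanSpace ℝ (Fin n), g x ≠ ⊤ → g y ≠ ⊤ →
      ‖S' x - S' y‖ ≤ L * ‖x - y‖)
    (Y G : Ω → EuclideanSpace ℝ (Fin n))
    (hG2 : MemLp G 2 μ) (hSY2 : MemLp (fun ω => S' (Y ω)) 2 μ)
    (hvar : ∀ᵐ ω ∂μ, (μ[fun ω' => ‖G ω' - S' (Y ω')‖ ^ 2|m]) ω ≤ σ ^ 2 / w ^ 2)
    (Yp : Ω → EuclideanSpace ℝ (Fin n)) (hYp : ∀ ω, Yp ω = prox (Y ω - η • G ω))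
    (hres : ∀ᵐ ω ∂μ, δ / w ≤ ‖proxRes prox η (Y ω) (G ω)‖)
    (gY gYp : Ω → ℝ)
    (hgY : ∀ ω, ((gY ω : ℝ) : WithTop ℝ) = g (Y ω))
    (hgYp : ∀ ω, ((gYp ω : ℝ) : WithTop ℝ) = g (Yp ω))
    (hint1 : Integrable (fun ω => S (Y ω) + gY ω) μ)
    (hint2 : Integrable (fun ω => S (Yp ω) + gYp ω) μ) :
    ∀ᵐ ω ∂μ,
      η / w ^ 2 * ((1 - η * L) * δ ^ 2 / 2 - σ ^ 2) ≤
        (μ[fun ω' => (S (Y ω') + gY ω') - (S (Yp ω') + gYp ω')|m]) ω := by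
  have hηL : η * L < 1 := by rwa [lt_div_iff₀ hL] at hη'
  have hw₀ : 0 < w := by linarith
  have hdecrease : ∀ ω, η * (1 - η * L) / 2 * ‖proxRes prox η (Y ω) (G ω)‖ ^ 2
      - η / 2 * ‖G ω - S' (Y ω)‖ ^ 2 ≤ (S (Y ω) + gY ω) - (S (Yp ω) + gYp ω) := fun ω => by
    have hgYp' := (hgYp ω).symm
    rw [hYp] at hgYp' ⊢
    exact (hprox _).1.proxGrad_sufficient_decrease hg.extConvex hη hgrad hsmooth (hgY ω).symm
      hgYp'
  have hbound : ∀ᵐ ω ∂μ, η * (1 - η * L) / 2 * (δ / w) ^ 2 - η / 2 * ‖G ω - S' (Y ω)‖ ^ 2 ≤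
      (S (Y ω) + gY ω) - (S (Yp ω) + gYp ω) := by
    filter_upwards [hres] with ω hω
    have hsq := pow_le_pow_left₀ (by positivity) hω 2
    have hcoef : 0 ≤ η * (1 - η * L) / 2 := by nlinarith
    linarith [hdecrease ω, mul_le_mul_of_nonneg_left hsq hcoef]
  filter_upwards [ae_sub_mul_le_condExp hm (by positivity) (hint1.sub hint2)
    ((hG2.sub hSY2).integrable_norm_pow two_ne_zero) hbound hvar] with ω hω
  refine le_trans ?_ hω
  rw [div_pow]
  field_simp
  nlinarith

/-- expected per-step decrease, key step of Theorem 4: under conditionally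
unbiased noisy gradients with conditional second moment `≤ σ²/w²`, if the noisy residual
satisfies `‖P_η^g(Y; G)‖ ≥ δ/w` a.s., then with `Y⁺ = prox_{ηg}(Y − ηG)`,
`E[(S(Y)+g(Y)) − (S(Y⁺)+g(Y⁺)) | 𝒢] ≥ (η/w²)((1 − ηL)δ²/2 − σ²)` a.s.
(The real-valued functions `gY, gYp` record the finite values of `g` along `Y` and `Y⁺`,
expressing that these iterates lie in `dom g`.) -/
theorem stmt10 {n : ℕ} {Ω : Type*} [inst : MeasurableSpace Ω] (μ : Measure Ω)
    [IsProbabilityMeasure μ] (m : MeasurableSpace Ω) (hm : m ≤ inst)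
    (g : EuclideanSpace ℝ (Fin n) → WithTop ℝ) (hg : ProperConvexLsc g)
    (prox : EuclideanSpace ℝ (Fin n) → EuclideanSpace ℝ (Fin n))
    (L η δ σ w : ℝ) (hL : 0 < L) (hη : 0 < η) (hη' : η < 1 / L) (hδ : 0 < δ)
    (hσ : 0 < σ) (hw : 1 ≤ w)
    (hprox : IsProxFun g η prox)
    (S : EuclideanSpace ℝ (Fin n) → ℝ) (S' : EuclideanSpace ℝ (Fin n) → EuclideanSpace ℝ (Fin n))
    (hgrad : ∀ x, HasGradientAt S (S' x) x) (hS'cont : Continuous S')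
    (hsmooth : ∀ x y : EuclideanSpace ℝ (Fin n), g x ≠ ⊤ → g y ≠ ⊤ →
      ‖S' x - S' y‖ ≤ L * ‖x - y‖)
    (Y G : Ω → EuclideanSpace ℝ (Fin n))
    (hYmeas : Measurable[m] Y)
    (hY2 : MemLp Y 2 μ) (hG2 : MemLp G 2 μ) (hSY2 : MemLp (fun ω => S' (Y ω)) 2 μ)
    (hcond : μ[G|m] =ᵐ[μ] fun ω => S' (Y ω))
    (hvar : ∀ᵐ ω ∂μ, (μ[fun ω' => ‖G ω' - S' (Y ω')‖ ^ 2|m]) ω ≤ σ ^ 2 / w ^ 2)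
    (Yp : Ω → EuclideanSpace ℝ (Fin n)) (hYp : ∀ ω, Yp ω = prox (Y ω - η • G ω))
    (hres : ∀ᵐ ω ∂μ, δ / w ≤ ‖proxRes prox η (Y ω) (G ω)‖)
    (gY gYp : Ω → ℝ)
    (hgY : ∀ ω, ((gY ω : ℝ) : WithTop ℝ) = g (Y ω))
    (hgYp : ∀ ω, ((gYp ω : ℝ) : WithTop ℝ) = g (Yp ω))
    (hint1 : Integrable (fun ω => S (Y ω) + gY ω) μ)
    (hint2 : Integrable (fun ω => S (Yp ω) + gYp ω) μ) :
    ∀ᵐ ω ∂μ,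
      η / w ^ 2 * ((1 - η * L) * δ ^ 2 / 2 - σ ^ 2) ≤
        (μ[fun ω' => (S (Y ω') + gY ω') - (S (Yp ω') + gYp ω')|m]) ω :=
  stmt10_general (inst := inst) μ m hm g hg prox L η δ σ w hL hη hη' hδ hw hprox S S' hgrad hsmooth
    Y G hG2 hSY2 hvar Yp hYp hres gY gYp hgY hgYp hint1 hint2
end
end
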